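/- For every complete assignment τ to the universal variables u₁,…,uₙ of Φₙ, every term-resolution proof of the empty term from Φₙ contains a term generated by the model-generation rule (a leaf of the proof) that agrees with τ. -/

import Mathlib

/-!
Framework for prenex QCNF: variables are natural numbers; a quantifier prefix is
given by `ex : Var → Bool` (`ex v = true` iff variable `v` is existential), and
the prefix order on variables (hence on literals) is `<` on ℕ.
-/

abbrev Var := ℕ

/-- A literal: a variable together with a polarity (`pos = true` for `x`, `false` for `x̄`). -/
structure Lit where
  var : Var
  pos : Bool
deriving DecidableEq

/-- The complementary literal. -/
def Lit.neg (l : Lit) : Lit := ⟨l.var, !l.pos⟩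

/-- Clauses (disjunctions) and terms (conjunctions) are finite sets of literals. -/
abbrev Clause := Finset Lit
abbrev Term := Finset Lit

/-- A set of literals contains no complementary pair. -/
def LitSetOk (C : Finset Lit) : Prop := ∀ l ∈ C, l.neg ∉ C

instance (C : Finset Lit) : Decidable (LitSetOk C) :=
  inferInstanceAs (Decidable (∀ l ∈ C, l.neg ∉ C))

/-- The resOf on pivot literal `p` (used both for clauses and for terms). -/
def resOf (p : Lit) (A B : Finset Lit) : Finset Lit := A.erase p ∪ B.erase p.neg

/-- Resolution of `A` (containing `p`) with `B` (containing `p.neg`) is defined: the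
union of the side literals contains no complementary pair and neither `p` nor `p.neg`. -/
def ResOk (p : Lit) (A B : Finset Lit) : Prop :=
  p ∈ A ∧ p.neg ∈ B ∧ p ∉ resOf p A B ∧ p.neg ∉ resOf p A B ∧
    LitSetOk (resOf p A B)

instance (p : Lit) (A B : Finset Lit) : Decidable (ResOk p A B) :=
  inferInstanceAs (Decidable (p ∈ A ∧ p.neg ∈ B ∧ p ∉ resOf p A B ∧
    p.neg ∉ resOf p A B ∧ LitSetOk (resOf p A B)))

/-- ∀-reduction: `C'` results from `C` by removing every universal literal `l` such
that no existential literal `k ∈ C` satisfies `l < k`. -/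
def IsForallReduct (ex : Var → Bool) (C C' : Clause) : Prop :=
  ∀ l : Lit, l ∈ C' ↔ l ∈ C ∧ (ex l.var = true ∨ ∃ k ∈ C, ex k.var = true ∧ l.var < k.var)

/-- QU-resolution proofs of a clause from the matrix `φ` under the prefix `ex`:
every clause is in `φ`, or a QU-resOf of two earlier clauses (the pivot may be
universal), or results from an earlier clause by ∀-reduction. -/
inductive QUProof (ex : Var → Bool) (φ : Finset Clause) : Clause → Prop
  | ax {C : Clause} : C ∈ φ → QUProof ex φ C
  | res {A B : Clause} {p : Lit} : QUProof ex φ A → QUProof ex φ B → ResOk p A B →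
      QUProof ex φ (resOf p A B)
  | red {C C' : Clause} : QUProof ex φ C → IsForallReduct ex C C' → QUProof ex φ C'

/-- ∃-reduction: `T'` results from `T` by removing every existential literal `l` such
that no universal literal `k ∈ T` satisfies `l < k`. -/
def IsExistsReduct (ex : Var → Bool) (T T' : Term) : Prop :=
  ∀ l : Lit, l ∈ T' ↔ l ∈ T ∧ (ex l.var = false ∨ ∃ k ∈ T, ex k.var = false ∧ l.var < k.var)

/-- Model generation rule: `T` is generated from the matrix `φ` if every clause of `φ`
contains a literal belonging to `T`. -/
def ModelGen (φ : Finset Clause) (T : Term) : Prop := ∀ C ∈ φ, ∃ l ∈ C, l ∈ T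

/-- `π` is a term-resolution proof of the term `T` from the QCNF with prefix `ex` and
matrix `φ`: a finite sequence of terms ending in `T`, each generated by model
generation or obtained from earlier terms by ∃-reduction or term-resolution. -/
def IsTermResProof (ex : Var → Bool) (φ : Finset Clause) (π : List Term) (T : Term) : Prop :=
  π ≠ [] ∧ π.getLast? = some T ∧
    ∀ i : Fin π.length, LitSetOk (π.get i) ∧
      (ModelGen φ (π.get i) ∨
        (∃ j : Fin π.length, j < i ∧ IsExistsReduct ex (π.get j) (π.get i)) ∨
        (∃ j k : Fin π.length, j < i ∧ k < i ∧ ∃ p : Lit,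
          ResOk p (π.get j) (π.get k) ∧ π.get i = resOf p (π.get j) (π.get k)))

/-- Value of a literal under a total assignment. -/
def evalLit (σ : Var → Bool) (l : Lit) : Bool := if l.pos then σ l.var else !σ l.var

/-- A strategy assigns to each (existential) variable a Boolean function of the
universal assignment — the semantic counterpart of a propositional formula. -/
abbrev Strategy := Var → (Var → Bool) → Bool

/-- The total assignment induced by a strategy `M` and a universal assignment `τ`. -/
def Strategy.assign (ex : Var → Bool) (M : Strategy) (τ : Var → Bool) : Var → Bool :=
  fun v => if ex v then M v τ else τ v

/-- The definition of each existential variable depends only on the universal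
variables preceding it in the prefix. -/
def WellFormed (ex : Var → Bool) (M : Strategy) : Prop :=
  ∀ e, ex e = true → ∀ τ τ' : Var → Bool,
    (∀ u, ex u = false → u < e → τ u = τ' u) → M e τ = M e τ'

/-- `M` is a model of the QCNF with prefix `ex` and matrix `φ`: it is a well-formed
strategy and `M(φ)` is a tautology. -/
def IsModel (ex : Var → Bool) (φ : Finset Clause) (M : Strategy) : Prop :=
  WellFormed ex M ∧
    ∀ τ : Var → Bool, ∀ C ∈ φ, ∃ l ∈ C, evalLit (Strategy.assign ex M τ) l = true

/-- A term `T` agrees with an assignment `τ` to the universal variables iff there is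
no (universal) literal `l` with `l̄ ∈ T` and `τ(l) = 1`. -/
def Agrees (ex : Var → Bool) (τ : Var → Bool) (T : Term) : Prop :=
  ¬∃ l : Lit, ex l.var = false ∧ l.neg ∈ T ∧ evalLit τ l = true

/-- Edge `a → b` of the binary implication graph of `φ`: the binary clause
`a.neg ∨ b` is in `φ` (a clause `l₁ ∨ l₂` yields the edges `l̄₁ → l₂`, `l̄₂ → l₁`). -/
def ImpEdge (φ : Finset Clause) (a b : Lit) : Prop :=
  a ≠ b ∧ a.neg ≠ b ∧ ({a.neg, b} : Clause) ∈ φ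

/-- The existential literal `l` of the clause `C` is blocked in the matrix `φ`. -/
def BlockedIn (ex : Var → Bool) (φ : Finset Clause) (C : Clause) (l : Lit) : Prop :=
  ex l.var = true ∧ l ∈ C ∧ ∀ D ∈ φ, l.neg ∈ D → ∃ k ∈ C, k.var < l.var ∧ k.neg ∈ D

/-- One step of blocked clause elimination: remove one blocked clause. -/
def BCEStep (ex : Var → Bool) (φ φ' : Finset Clause) : Prop :=
  ∃ C ∈ φ, (∃ l, BlockedIn ex φ C l) ∧ φ' = φ.erase C

/-- The side-condition for eliminating the existential variable `x` from the matrix `φ`. -/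
def VEside (x : Var) (φ : Finset Clause) : Prop :=
  ∀ C ∈ φ, (⟨x, true⟩ : Lit) ∈ C → (∃ k ∈ C, x < k.var) →
    ∀ D ∈ φ, (⟨x, false⟩ : Lit) ∈ D → ∃ z ∈ C, z.var < x ∧ z.neg ∈ D

/-- The set of all defined resolvents on `x` between the clauses of `φ` containing the
literal `x` and those containing `x̄`. -/
def VEresolvents (x : Var) (φ : Finset Clause) : Finset Clause :=
  ((φ ×ˢ φ).filter fun q => ResOk ⟨x, true⟩ q.1 q.2).image
    fun q => resOf ⟨x, true⟩ q.1 q.2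

/-- Variable elimination of `x`: replace all clauses mentioning `x` by all defined
resolvents on `x`. -/
def VEapply (x : Var) (φ : Finset Clause) : Finset Clause :=
  φ.filter (fun C => (⟨x, true⟩ : Lit) ∉ C ∧ (⟨x, false⟩ : Lit) ∉ C) ∪ VEresolvents x φ

/-- The variables of Φₙ (0-indexed): `uᵢ` is variable `2*i`, `eᵢ` is variable `2*i+1`,
so the prefix `∀u₀∃e₀…∀u_{n-1}∃e_{n-1}` is the natural order. -/
def uLit (i : ℕ) (b : Bool) : Lit := ⟨2 * i, b⟩
def eLit (i : ℕ) (b : Bool) : Lit := ⟨2 * i + 1, b⟩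

/-- The prefix of Φₙ: even variables universal, odd variables existential. -/
def phiEx : Var → Bool := fun v => v % 2 == 1

/-- The clause `ūᵢ ∨ eᵢ`. -/
def posClause (i : ℕ) : Clause := {uLit i false, eLit i true}
/-- The clause `uᵢ ∨ ēᵢ`. -/
def negClause (i : ℕ) : Clause := {uLit i true, eLit i false}

/-- The matrix of Φₙ: `⋀_{i<n} (ūᵢ ∨ eᵢ) ∧ (uᵢ ∨ ēᵢ)`. -/
def PhiMatrix (n : ℕ) : Finset Clause :=
  (Finset.range n).biUnion fun i => {posClause i, negClause i}

/-- The set `W` of witnesses for the literal `l` being blocked in the clause `C`. -/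
def witnesses (φ : Finset Clause) (C : Clause) (l : Lit) : Finset Lit :=
  C.filter fun k => k ≠ l ∧ k.var < l.var ∧ ∃ D ∈ φ, k.neg ∈ D ∧ l.neg ∈ D

/-- `φ` with all literals not less than `x` deleted from each clause. -/
def restrictBelow (x : Var) (φ : Finset Clause) : Finset Clause :=
  φ.image fun C => C.filter fun l => l.var < x

/-!
Agreement with `τ` propagates from a term back to a premise it was derived from:
∃-reduction only deletes existential literals, and if `τ` agrees with the resolvent of
`T₁ ∧ p` and `T₂ ∧ p̄`, it agrees with `T₁ ∧ p` when `τ(p) = 1` and with `T₂ ∧ p̄` otherwise.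
Since every assignment agrees with the empty term, following premises back from the
conclusion must end at a leaf of the proof that agrees with `τ`.
-/

lemma Lit.neg_neg (l : Lit) : l.neg.neg = l := by
  simp [Lit.neg]

lemma evalLit_neg (τ : Var → Bool) (l : Lit) : evalLit τ l.neg = !evalLit τ l := by
  cases l with
  | mk v b => cases b <;> simp [evalLit, Lit.neg]

section Agrees

variable {ex τ : Var → Bool}

lemma agrees_empty : Agrees ex τ ∅ := by
  rintro ⟨l, -, hl, -⟩
  exact Finset.notMem_empty _ hl

lemma Agrees.of_isExistsReduct {T T' : Term} (hred : IsExistsReduct ex T T')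
    (hT' : Agrees ex τ T') : Agrees ex τ T := by
  rintro ⟨l, hex, hmem, hl⟩
  exact hT' ⟨l, hex, (hred l.neg).mpr ⟨hmem, Or.inl (by simpa [Lit.neg] using hex)⟩, hl⟩

lemma Agrees.of_resOf_left {p : Lit} {A B : Term} (hT : Agrees ex τ (resOf p A B))
    (hp : evalLit τ p = true) : Agrees ex τ A := by
  rintro ⟨l, hex, hmem, hl⟩
  by_cases h : l.neg = p
  · rw [← Lit.neg_neg l, h, evalLit_neg, hp] at hl
    exact Bool.false_ne_true hl
  · exact hT ⟨l, hex, Finset.mem_union_left _ (Finset.mem_erase.mpr ⟨h, hmem⟩), hl⟩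

lemma Agrees.of_resOf_right {p : Lit} {A B : Term} (hT : Agrees ex τ (resOf p A B))
    (hp : evalLit τ p = false) : Agrees ex τ B := by
  rintro ⟨l, hex, hmem, hl⟩
  by_cases h : l.neg = p.neg
  · rw [← Lit.neg_neg l, h, Lit.neg_neg, hp] at hl
    exact Bool.false_ne_true hl
  · exact hT ⟨l, hex, Finset.mem_union_right _ (Finset.mem_erase.mpr ⟨h, hmem⟩), hl⟩

lemma Agrees.of_resOf {p : Lit} {A B : Term} (hT : Agrees ex τ (resOf p A B)) :
    Agrees ex τ A ∨ Agrees ex τ B := by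
  cases hp : evalLit τ p
  · exact Or.inr (hT.of_resOf_right hp)
  · exact Or.inl (hT.of_resOf_left hp)

end Agrees

lemma IsTermResProof.exists_modelGen_agrees {ex τ : Var → Bool} {φ : Finset Clause}
    {π : List Term} {T U : Term} (hπ : IsTermResProof ex φ π T) (hU : U ∈ π)
    (hag : Agrees ex τ U) : ∃ S ∈ π, ModelGen φ S ∧ Agrees ex τ S := by
  obtain ⟨i, rfl⟩ := List.mem_iff_get.mp hU
  clear hU
  induction i using WellFoundedLT.induction with
  | _ i ih =>
    obtain ⟨-, hmg | ⟨j, hji, hred⟩ | ⟨j, k, hji, hki, p, -, heq⟩⟩ := hπ.2.2 i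
    · exact ⟨π.get i, π.get_mem i, hmg, hag⟩
    · exact ih j hji (hag.of_isExistsReduct hred)
    · rw [heq] at hag
      rcases hag.of_resOf with hA | hB
      · exact ih j hji hA
      · exact ih k hki hB

theorem stmt1_general (n : ℕ) (τ : Var → Bool) (π : List Term)
    (hπ : IsTermResProof phiEx (PhiMatrix n) π (∅ : Term)) :
    ∃ T ∈ π, ModelGen (PhiMatrix n) T ∧ Agrees phiEx τ T :=
  hπ.exists_modelGen_agrees (List.mem_of_getLast? hπ.2.1) agrees_empty

theorem stmt1 (n : ℕ) (hn : 1 ≤ n) (τ : Var → Bool) (π : List Term)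
    (hπ : IsTermResProof phiEx (PhiMatrix n) π (∅ : Term)) :
    ∃ T ∈ π, ModelGen (PhiMatrix n) T ∧ Agrees phiEx τ T :=
  stmt1_general n τ π hπ
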